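/- arXiv:1406.2755 — 2 statements merged into one kernel-verified Lean document; each statement's English description precedes it below -/
import Mathlib

section
/- Fix a natural number s, and let q_s(z) = ∑_{n ≥ 2s+1} t_n^{(s)} z^n as a formal power series in z over ℚ, where t_n^{(s)} = T_n^{(s)}(1) are the incomplete tribonacci numbers. Then (1 − z)^{s+1} · (1 − z − z^2 − z^3) · q_s(z) = z^{2s+1} · [ ( t_{2s+1} + (t_{2s-1} + t_{2s}) z + t_{2s} z^2 ) · (1 − z)^{s+1} − z^2 (1 + z)^{s+1} ], where t_{-1} is interpreted as 0 (needed when s = 0). -/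
open PowerSeries

/-- The tribonacci numbers: `t 0 = 0`, `t 1 = t 2 = 1`,
`t (n+3) = t (n+2) + t (n+1) + t n`. -/
def trib : ℕ → ℚ
  | 0 => 0
  | 1 => 1
  | 2 => 1
  | (n + 3) => trib (n + 2) + trib (n + 1) + trib n

/-- The incomplete tribonacci number `t_n^{(s)}`, for subscript `n ≥ 1`:
`t_{n+1}^{(s)} = ∑_{i=0}^{s} ∑_{j=0}^{i} C(i,j) C(n-i-j, i)`. -/
def incTribNum (n s : ℕ) : ℚ :=
  ∑ i ∈ Finset.range (s + 1), ∑ j ∈ Finset.range (i + 1),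
    (Nat.choose i j : ℚ) * (Nat.choose (n - 1 - i - j) i : ℚ)

/-! Write `F = ∑ₙ t_n^{(s)} zⁿ`; truncated subtraction makes `t_0^{(s)} = 1`. Summing over `j`
first gives `F = 1 + ∑_{i ≤ s} z^{i+1} (1 + z)^i / (1 - z)^{i+1}`, and since
`1 - z - z² - z³ = (1 - z) - z² (1 + z)` the sum telescopes:
`(1 - z)^{s+1} (1 - z - z² - z³) F = (1 - z)^{s+1} (1 - z² - z³) - z^{2s+3} (1 + z)^{s+1}`.
Multiplying the tribonacci partial sum `∑_{n ≤ N} t_n zⁿ` by `1 - z - z² - z³` leaves `z` plus a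
boundary term of order `N + 1`, so comparing the two for `N = 2s + 2` modulo the unit
`(1 - z)^{s+1} (1 - z - z² - z³)` shows `t_n^{(s)} = t_n` for `1 ≤ n ≤ 2s + 2`. Hence
`q_s = F - 1 - ∑_{n ≤ 2s} t_n zⁿ`, and the case `N = 2s` gives the identity. -/

lemma trib_add_two (n : ℕ) : trib (n + 2) = trib (n + 1) + trib n + trib (n - 1) := by
  cases n <;> simp [trib]

lemma mk_choose_eq_X_pow_mul {R : Type*} [Semiring R] (d : ℕ) :
    (mk fun n => (n.choose d : R)) = X ^ d * mk fun n => ((d + n).choose d : R) := by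
  ext n
  rw [coeff_X_pow_mul', coeff_mk, coeff_mk]
  split_ifs with h
  · rw [Nat.add_sub_cancel' h]
  · rw [Nat.choose_eq_zero_of_lt (not_le.1 h), Nat.cast_zero]

lemma one_sub_pow_mul_mk_choose {R : Type*} [CommRing R] (d : ℕ) :
    (1 - X : R⟦X⟧) ^ (d + 1) * mk (fun n => (n.choose d : R)) = X ^ d := by
  rw [mk_choose_eq_X_pow_mul, mul_left_comm, mul_comm _ (mk _),
    mk_add_choose_mul_one_sub_pow_eq_one, mul_one]

lemma one_add_X_pow_eq_sum {R : Type*} [CommSemiring R] (i : ℕ) :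
    (1 + X : R⟦X⟧) ^ i = ∑ j ∈ Finset.range (i + 1), C (i.choose j : R) * X ^ j := by
  rw [add_comm, add_pow]
  refine Finset.sum_congr rfl fun j _ => ?_
  rw [one_pow, mul_one, map_natCast, mul_comm]

lemma incTribNum_zero (s : ℕ) : incTribNum 0 s = 1 := by
  rw [incTribNum, Finset.sum_eq_single_of_mem 0 (Finset.mem_range.2 s.succ_pos)]
  · simp
  · intro i _ hi
    refine Finset.sum_eq_zero fun j _ => ?_
    simp [Nat.choose_eq_zero_of_lt (Nat.pos_of_ne_zero hi)]

lemma mk_incTribNum (s : ℕ) :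
    mk (fun n => incTribNum n s) =
      1 + ∑ i ∈ Finset.range (s + 1),
        X ^ (i + 1) * (1 + X) ^ i * mk (fun n => (n.choose i : ℚ)) := by
  ext n
  simp_rw [one_add_X_pow_eq_sum, Finset.mul_sum, Finset.sum_mul, map_add, map_sum]
  rcases n.eq_zero_or_pos with rfl | hn
  · simp [incTribNum_zero, mul_comm, mul_assoc]
  rw [coeff_one, if_neg hn.ne', zero_add, coeff_mk, incTribNum]
  refine Finset.sum_congr rfl fun i _ => Finset.sum_congr rfl fun j hj => ?_
  rw [show X ^ (i + 1) * (C (i.choose j : ℚ) * X ^ j) * mk (fun n => (n.choose i : ℚ)) =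
      C (i.choose j : ℚ) * (X ^ (i + 1 + j) * mk fun n => (n.choose i : ℚ)) by ring,
    coeff_C_mul, coeff_X_pow_mul', coeff_mk]
  split_ifs with h
  · rw [show n - 1 - i - j = n - (i + 1 + j) by omega]
  · have hi : 0 < i := by have := Finset.mem_range.1 hj; omega
    rw [show n - 1 - i - j = 0 by omega, Nat.choose_eq_zero_of_lt hi]
    simp

lemma one_sub_pow_mul_mk_incTribNum (s : ℕ) :
    (1 - X) ^ (s + 1) * mk (fun n => incTribNum n s) =
      (1 - X) ^ (s + 1) +
        X * ∑ i ∈ Finset.range (s + 1), (X ^ 2 * (1 + X)) ^ i * (1 - X) ^ (s - i) := by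
  rw [mk_incTribNum, mul_add, mul_one, Finset.mul_sum, Finset.mul_sum]
  congr 1
  refine Finset.sum_congr rfl fun i hi => ?_
  have hsplit : (1 - X : ℚ⟦X⟧) ^ (s + 1) = (1 - X) ^ (s - i) * (1 - X) ^ (i + 1) := by
    rw [← pow_add]
    congr 1
    have := Finset.mem_range.1 hi
    omega
  calc (1 - X : ℚ⟦X⟧) ^ (s + 1) * (X ^ (i + 1) * (1 + X) ^ i * mk fun n => (n.choose i : ℚ))
      = (1 - X) ^ (s - i) * X ^ (i + 1) * (1 + X) ^ i *
          ((1 - X) ^ (i + 1) * mk fun n => (n.choose i : ℚ)) := by rw [hsplit]; ring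
    _ = X * ((X ^ 2 * (1 + X)) ^ i * (1 - X) ^ (s - i)) := by
      rw [one_sub_pow_mul_mk_choose, mul_pow, ← pow_mul]; ring

lemma one_sub_pow_mul_tribDenom_mul_mk_incTribNum (s : ℕ) :
    (1 - X) ^ (s + 1) * (1 - X - X ^ 2 - X ^ 3) * mk (fun n => incTribNum n s) =
      (1 - X) ^ (s + 1) * (1 - X ^ 2 - X ^ 3) - X ^ (2 * s + 3) * (1 + X) ^ (s + 1) := by
  have htelescope := geom_sum₂_mul (X ^ 2 * (1 + X) : ℚ⟦X⟧) (1 - X) (s + 1)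
  simp only [Nat.add_sub_cancel] at htelescope
  rw [mul_pow, ← pow_mul] at htelescope
  linear_combination (1 - X - X ^ 2 - X ^ 3) * one_sub_pow_mul_mk_incTribNum s - X * htelescope

noncomputable def tribPartialSum (N : ℕ) : ℚ⟦X⟧ :=
  ∑ n ∈ Finset.range (N + 1), C (trib n) * X ^ n

lemma coeff_tribPartialSum (N m : ℕ) :
    coeff m (tribPartialSum N) = if m ≤ N then trib m else 0 := by
  simp [tribPartialSum, coeff_X_pow]

lemma tribDenom_mul_tribPartialSum (N : ℕ) :
    (1 - X - X ^ 2 - X ^ 3) * tribPartialSum N =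
      X - X ^ (N + 1) *
        (C (trib (N + 1)) + C (trib (N - 1) + trib N) * X + C (trib N) * X ^ 2) := by
  induction N with
  | zero => simp [tribPartialSum, trib]
  | succ N ih =>
    rw [tribPartialSum, Finset.sum_range_succ, mul_add, ← tribPartialSum, ih, trib_add_two,
      Nat.add_sub_cancel]
    simp only [map_add]
    ring

lemma X_pow_dvd_mk_incTribNum_sub (s : ℕ) :
    X ^ (2 * s + 3) ∣ mk (fun n => incTribNum n s) - (1 + tribPartialSum (2 * s + 2)) := by
  have hunit : IsUnit ((1 - X) ^ (s + 1) * (1 - X - X ^ 2 - X ^ 3) : ℚ⟦X⟧) := by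
    rw [isUnit_iff_constantCoeff]
    simp
  refine hunit.dvd_mul_left.1 ⟨(1 - X) ^ (s + 1) * (C (trib (2 * s + 3)) +
    C (trib (2 * s + 2 - 1) + trib (2 * s + 2)) * X + C (trib (2 * s + 2)) * X ^ 2) -
    (1 + X) ^ (s + 1), ?_⟩
  linear_combination one_sub_pow_mul_tribDenom_mul_mk_incTribNum s -
    (1 - X) ^ (s + 1) * tribDenom_mul_tribPartialSum (2 * s + 2)

lemma incTribNum_eq_trib {s n : ℕ} (hn : 0 < n) (hns : n ≤ 2 * s + 2) :
    incTribNum n s = trib n := by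
  have hcoeff := X_pow_dvd_iff.1 (X_pow_dvd_mk_incTribNum_sub s) n (by omega)
  simpa [coeff_tribPartialSum, hns, hn.ne', sub_eq_zero] using hcoeff

lemma mk_incTribNum_tail (s : ℕ) :
    mk (fun n => if 2 * s + 1 ≤ n then incTribNum n s else 0) =
      mk (fun n => incTribNum n s) - (1 + tribPartialSum (2 * s)) := by
  ext m
  simp only [map_sub, map_add, coeff_mk, coeff_tribPartialSum, coeff_one]
  rcases m.eq_zero_or_pos with rfl | hm
  · simp [incTribNum_zero, trib]
  · rw [if_neg hm.ne']
    split_ifs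
    · omega
    · ring
    · rw [incTribNum_eq_trib hm (by omega)]; ring
    · omega

/-- The convention `t_{-1} = 0` (needed for `t_{2s-1}` when `s = 0`) agrees with truncated
natural subtraction since `trib 0 = 0`. -/
theorem incTribNum_generating_function (s : ℕ) :
    (1 - (X : PowerSeries ℚ)) ^ (s + 1) *
        ((1 - X - X ^ 2 - X ^ 3) *
          PowerSeries.mk (fun n => if 2 * s + 1 ≤ n then incTribNum n s else 0)) =
      (X : PowerSeries ℚ) ^ (2 * s + 1) *
        ((PowerSeries.C (trib (2 * s + 1)) +
            PowerSeries.C (trib (2 * s - 1) + trib (2 * s)) * X +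
            PowerSeries.C (trib (2 * s)) * X ^ 2) *
          (1 - X) ^ (s + 1) - X ^ 2 * (1 + X) ^ (s + 1)) := by
  rw [mk_incTribNum_tail]
  linear_combination one_sub_pow_mul_tribDenom_mul_mk_incTribNum s -
    (1 - X) ^ (s + 1) * tribDenom_mul_tribPartialSum (2 * s)
end

section
/- For every natural number n and every real number x, T_{n+1}(x) = ∑_{i=0}^{⌊n/2⌋} ∑_{j=0}^{i} C(i,j) C(n-i-j, i) x^{2n-3(i+j)}; that is, the incomplete tribonacci polynomial with s = ⌊n/2⌋ equals the tribonacci polynomial: T_{n+1}^{(⌊n/2⌋)}(x) = T_{n+1}(x). -/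
/-- The tribonacci polynomials. -/
def tribPoly : ℕ → ℝ → ℝ
  | 0, _ => 0
  | 1, _ => 1
  | 2, x => x ^ 2
  | (n + 3), x => x ^ 2 * tribPoly (n + 2) x + x * tribPoly (n + 1) x + tribPoly n x

/-- The incomplete tribonacci polynomial `T_n^{(s)}(x)`, for subscript `n ≥ 1`:
`T_{n+1}^{(s)}(x) = ∑_{i=0}^{s} ∑_{j=0}^{i} C(i,j) C(n-i-j, i) x^{2n-3(i+j)}`. -/
def incTrib (n s : ℕ) (x : ℝ) : ℝ :=
  ∑ i ∈ Finset.range (s + 1), ∑ j ∈ Finset.range (i + 1),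
    (Nat.choose i j : ℝ) * (Nat.choose (n - 1 - i - j) i : ℝ) * x ^ (2 * (n - 1) - 3 * (i + j))

open Finset

def co (n i j : ℕ) : ℕ := Nat.choose i j * Nat.choose (n - i - j) i

lemma co_eq_zero {n i j : ℕ} (h : i < j ∨ n < 2*i + j) : co n i j = 0 := by
  rcases h with h | h
  · simp [co, Nat.choose_eq_zero_of_lt h]
  · rcases Nat.eq_zero_or_pos i with hi | hi
    · subst hi
      simp [co, Nat.choose_eq_zero_of_lt (show 0 < j by omega)]
    · simp [co, Nat.choose_eq_zero_of_lt (show n - i - j < i by omega)]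

lemma co_bound {n i j : ℕ} (h : co n i j ≠ 0) : j ≤ i ∧ 2*i + j ≤ n := by
  by_contra hc
  exact h (co_eq_zero (by omega))

lemma R1 (n i j : ℕ) :
    co (n+3) (i+1) (j+1) = co (n+2) (i+1) (j+1) + co (n+1) i (j+1) + co n i j := by
  rcases le_or_gt (i + j) n with h | h
  · have h1 : n + 3 - (i+1) - (j+1) = (n - i - j) + 1 := by omega
    have h2 : n + 2 - (i+1) - (j+1) = n - i - j := by omega
    have h3 : n + 1 - i - (j+1) = n - i - j := by omega
    simp only [co, h1, h2, h3, Nat.choose_succ_succ (n - i - j) i,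
      Nat.choose_succ_succ i j]
    ring
  · rw [co_eq_zero (n := n+3) (Or.inr (by omega)),
      co_eq_zero (n := n+2) (Or.inr (by omega)),
      co_eq_zero (n := n+1) (Or.inr (by omega)),
      co_eq_zero (n := n) (Or.inr (by omega))]

lemma R2 (n i : ℕ) :
    co (n+3) (i+1) 0 = co (n+2) (i+1) 0 + co (n+1) i 0 := by
  rcases le_or_gt i (n+1) with h | h
  · have h1 : n + 3 - (i+1) - 0 = (n + 1 - i) + 1 := by omega
    have h2 : n + 2 - (i+1) - 0 = n + 1 - i := by omega
    have h3 : n + 1 - i - 0 = n + 1 - i := by omega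
    simp only [co, h1, h2, h3, Nat.choose_succ_succ (n + 1 - i) i, Nat.choose_zero_right,
      one_mul]
    ring
  · rw [co_eq_zero (n := n+3) (Or.inr (by omega)),
      co_eq_zero (n := n+2) (Or.inr (by omega)),
      co_eq_zero (n := n+1) (Or.inr (by omega))]

lemma R3 (n m j : ℕ) : co n 0 j = co m 0 j := by
  simp [co, Nat.sub_zero]

def F (n : ℕ) (x : ℝ) : ℝ :=
  ∑ i ∈ range (n+1), ∑ j ∈ range (n+1), (co n i j : ℝ) * x ^ (2*n - 3*(i+j))

lemma pow_shift (k : ℕ) (x : ℝ) (t a b : ℕ) (h : k ≠ 0 → a + t = b) :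
    x ^ t * ((k:ℝ) * x ^ a) = (k:ℝ) * x ^ b := by
  rcases eq_or_ne k 0 with h0 | h0
  · simp [h0]
  · rw [← h h0, pow_add]; ring

lemma pow_shift1 (k : ℕ) (x : ℝ) (a b : ℕ) (h : k ≠ 0 → a + 1 = b) :
    (k:ℝ) * x ^ b = x * ((k:ℝ) * x ^ a) := by
  rw [← pow_shift k x 1 a b h, pow_one]

lemma coe_pow_congr (k : ℕ) (x : ℝ) (a b : ℕ) (h : k ≠ 0 → a = b) :
    (k:ℝ) * x ^ a = (k:ℝ) * x ^ b := by
  rcases eq_or_ne k 0 with h0 | h0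
  · simp [h0]
  · rw [h h0]

lemma big_eq (n N M : ℕ) (hN : n + 1 ≤ N) (hM : n + 1 ≤ M) (x : ℝ) (E : ℕ → ℕ → ℕ) :
    ∑ i ∈ range N, ∑ j ∈ range M, (co n i j : ℝ) * x ^ E i j
      = ∑ i ∈ range (n+1), ∑ j ∈ range (n+1), (co n i j : ℝ) * x ^ E i j := by
  rw [← Finset.sum_subset (Finset.range_subset_range.2 hN)]
  · refine Finset.sum_congr rfl fun i hi => ?_
    rw [← Finset.sum_subset (Finset.range_subset_range.2 hM)]
    intro j hj hj'
    rw [co_eq_zero (Or.inl (by simp at hj' hi ⊢; omega))]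
    simp
  · intro i hi hi'
    refine Finset.sum_eq_zero fun j hj => ?_
    rw [co_eq_zero (Or.inr (by simp at hi' ⊢; omega))]
    simp

def bco (n : ℕ) : ℕ → ℕ → ℕ
  | 0, _ => 0
  | (i+1), j => co (n+1) i j

def cco (n : ℕ) : ℕ → ℕ → ℕ
  | (i+1), (j+1) => co n i j
  | _, _ => 0

lemma co_split (n i j : ℕ) :
    co (n+3) i j = co (n+2) i j + bco n i j + cco n i j := by
  match i, j with
  | 0, j => simpa [bco, cco] using R3 (n+3) (n+2) j
  | (i+1), 0 => simpa [bco, cco] using R2 n i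
  | (i+1), (j+1) => simpa [bco, cco] using R1 n i j

lemma hA (n : ℕ) (x : ℝ) :
    x^2 * F (n+2) x
      = ∑ i ∈ range (n+4), ∑ j ∈ range (n+4),
          (co (n+2) i j : ℝ) * x ^ (2*(n+3) - 3*(i+j)) := by
  rw [big_eq (n+2) (n+4) (n+4) (by omega) (by omega) x (fun i j => 2*(n+3) - 3*(i+j)),
    F, Finset.mul_sum]
  refine Finset.sum_congr rfl fun i _ => ?_
  rw [Finset.mul_sum]
  refine Finset.sum_congr rfl fun j _ => ?_
  refine pow_shift _ _ _ _ _ fun h0 => ?_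
  obtain ⟨h1, h2⟩ := co_bound h0
  omega

lemma hB (n : ℕ) (x : ℝ) :
    x * F (n+1) x
      = ∑ i ∈ range (n+4), ∑ j ∈ range (n+4),
          (bco n i j : ℝ) * x ^ (2*(n+3) - 3*(i+j)) := by
  rw [Finset.sum_range_succ']
  have h0 : (∑ j ∈ range (n+4), (bco n 0 j : ℝ) * x ^ (2*(n+3) - 3*(0+j))) = 0 := by
    refine Finset.sum_eq_zero fun j _ => by simp [bco]
  rw [h0, add_zero]
  have hterm : ∀ i ∈ range (n+3), ∀ j ∈ range (n+4),
      (bco n (i+1) j : ℝ) * x ^ (2*(n+3) - 3*(i+1+j))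
        = x * ((co (n+1) i j : ℝ) * x ^ (2*(n+1) - 3*(i+j))) := by
    intro i _ j _
    show (co (n+1) i j : ℝ) * x ^ (2*(n+3) - 3*(i+1+j)) = _
    refine pow_shift1 _ _ _ _ fun h0 => ?_
    obtain ⟨h1, h2⟩ := co_bound h0
    omega
  symm
  calc ∑ i ∈ range (n+3), ∑ j ∈ range (n+4),
        (bco n (i+1) j : ℝ) * x ^ (2*(n+3) - 3*(i+1+j))
      = ∑ i ∈ range (n+3), ∑ j ∈ range (n+4),
        x * ((co (n+1) i j : ℝ) * x ^ (2*(n+1) - 3*(i+j))) := by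
        exact Finset.sum_congr rfl fun i hi => Finset.sum_congr rfl (hterm i hi)
    _ = x * ∑ i ∈ range (n+3), ∑ j ∈ range (n+4),
        (co (n+1) i j : ℝ) * x ^ (2*(n+1) - 3*(i+j)) := by
        rw [Finset.mul_sum]
        exact Finset.sum_congr rfl fun i _ => (Finset.mul_sum _ _ _).symm
    _ = x * F (n+1) x := by
        rw [big_eq (n+1) (n+3) (n+4) (by omega) (by omega) x
          (fun i j => 2*(n+1) - 3*(i+j)), F]

lemma hC (n : ℕ) (x : ℝ) :
    F n x
      = ∑ i ∈ range (n+4), ∑ j ∈ range (n+4),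
          (cco n i j : ℝ) * x ^ (2*(n+3) - 3*(i+j)) := by
  rw [Finset.sum_range_succ']
  have h0 : (∑ j ∈ range (n+4), (cco n 0 j : ℝ) * x ^ (2*(n+3) - 3*(0+j))) = 0 :=
    Finset.sum_eq_zero fun j _ => by simp [cco]
  rw [h0, add_zero]
  have hrow : ∀ i ∈ range (n+3),
      (∑ j ∈ range (n+4), (cco n (i+1) j : ℝ) * x ^ (2*(n+3) - 3*(i+1+j)))
        = ∑ j ∈ range (n+3), (co n i j : ℝ) * x ^ (2*n - 3*(i+j)) := by
    intro i _
    rw [Finset.sum_range_succ']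
    have hz : (cco n (i+1) 0 : ℝ) * x ^ (2*(n+3) - 3*(i+1+0)) = 0 := by simp [cco]
    rw [hz, add_zero]
    refine Finset.sum_congr rfl fun j _ => ?_
    show (co n i j : ℝ) * x ^ (2*(n+3) - 3*(i+1+(j+1))) = _
    refine coe_pow_congr _ _ _ _ fun h0 => ?_
    obtain ⟨h1, h2⟩ := co_bound h0
    omega
  rw [Finset.sum_congr rfl hrow,
    big_eq n (n+3) (n+3) (by omega) (by omega) x (fun i j => 2*n - 3*(i+j)), F]

lemma step (n : ℕ) (x : ℝ) :
    F (n+3) x = x^2 * F (n+2) x + x * F (n+1) x + F n x := by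
  calc F (n+3) x
      = (∑ i ∈ range (n+4), ∑ j ∈ range (n+4),
          (co (n+2) i j : ℝ) * x ^ (2*(n+3) - 3*(i+j)))
        + (∑ i ∈ range (n+4), ∑ j ∈ range (n+4),
          (bco n i j : ℝ) * x ^ (2*(n+3) - 3*(i+j)))
        + (∑ i ∈ range (n+4), ∑ j ∈ range (n+4),
          (cco n i j : ℝ) * x ^ (2*(n+3) - 3*(i+j))) := by
        rw [← Finset.sum_add_distrib, ← Finset.sum_add_distrib]
        show F (n+3) x = ∑ i ∈ range (n+4), _
        rw [F]
        refine Finset.sum_congr rfl fun i _ => ?_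
        rw [← Finset.sum_add_distrib, ← Finset.sum_add_distrib]
        refine Finset.sum_congr rfl fun j _ => ?_
        rw [co_split n i j]
        push_cast
        ring
    _ = x^2 * F (n+2) x + x * F (n+1) x + F n x := by
        rw [← hA n x, ← hB n x, ← hC n x]

lemma main (n : ℕ) (x : ℝ) : F n x = tribPoly (n+1) x := by
  induction n using Nat.strong_induction_on with
  | _ n ih =>
    match n with
    | 0 =>
      simp [F, tribPoly, co, Finset.sum_range_succ]
    | 1 =>
      simp [F, tribPoly, co, Finset.sum_range_succ]
    | 2 =>
      simp [F, tribPoly, co, Finset.sum_range_succ]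
      ring
    | (m+3) =>
      rw [step, ih (m+2) (by omega), ih (m+1) (by omega), ih m (by omega)]
      rfl

lemma stepA (n : ℕ) (x : ℝ) : incTrib (n+1) (n/2) x = F n x := by
  have h1 : incTrib (n+1) (n/2) x
      = ∑ i ∈ range (n/2+1), ∑ j ∈ range (i+1),
          (co n i j : ℝ) * x ^ (2*n - 3*(i+j)) := by
    simp only [incTrib, Nat.add_sub_cancel, co, Nat.cast_mul]
  rw [h1, F]
  have h2 : ∀ i ∈ range (n+1),
      (∑ j ∈ range (n+1), (co n i j : ℝ) * x ^ (2*n - 3*(i+j)))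
        = ∑ j ∈ range (i+1), (co n i j : ℝ) * x ^ (2*n - 3*(i+j)) := by
    intro i hi
    refine (Finset.sum_subset (Finset.range_subset_range.2 (by simp at hi; omega)) ?_).symm
    intro j _ hj'
    rw [co_eq_zero (Or.inl (by simp at hj'; omega))]
    simp
  rw [Finset.sum_congr rfl h2]
  refine Finset.sum_subset (Finset.range_subset_range.2 (by omega)) ?_
  intro i _ hi'
  refine Finset.sum_eq_zero fun j _ => ?_
  rw [co_eq_zero (Or.inr (by simp at hi'; omega))]
  simp

/-- `T_{n+1}^{(⌊n/2⌋)}(x) = T_{n+1}(x)`: the incomplete tribonacci polynomial with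
`s = ⌊n/2⌋` equals the tribonacci polynomial. -/
theorem incTrib_floor_eq_tribPoly (n : ℕ) (x : ℝ) :
    incTrib (n + 1) (n / 2) x = tribPoly (n + 1) x := by
  rw [stepA, main]
end
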